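/- Let E be a finite type, ε ∈ [0,1), and f, g : Finset E → ℝ with (1 − ε)·g(S) ≤ f(S) ≤ (1 + ε)·g(S) for every S : Finset E. Let F and G be the multilinear extensions of f and g, and f⁺, g⁺ their concave extensions. Let y⁺, x : E → ℝ with 0 ≤ y⁺(e) ≤ 1 and 0 ≤ x(e) ≤ 1 for all e, and suppose g⁺(y⁺) ≤ G(x) + Σ_{e ∈ E} y⁺(e) · (G(x ⊕ 1_e) − G(x)), where x ⊕ 1_e denotes the point obtained from x by setting coordinate e to 1 (the coordinatewise maximum of x with the indicator vector of e). Then ((1 − ε)/(1 + ε)) · f⁺(y⁺) ≤ F(x) + Σ_{e ∈ E} y⁺(e) · (F(x ⊕ 1_e) − F(x)) + (2ε/(1 + ε)) · (Σ_{e ∈ E} y⁺(e)) · F(x). -/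
import Mathlib


open Finset

/-- The multilinear extension of a set function `f` on a finite ground type. -/
noncomputable def multilinearExt {E : Type*} [Fintype E] [DecidableEq E]
    (f : Finset E → ℝ) (y : E → ℝ) : ℝ :=
  ∑ S : Finset E, f S * (∏ e ∈ S, y e) * ∏ e ∈ Sᶜ, (1 - y e)

/-- The concave extension `f⁺` of a set function `f` on a finite ground type. -/
noncomputable def concaveExt {E : Type*} [Fintype E] [DecidableEq E]
    (f : Finset E → ℝ) (y : E → ℝ) : ℝ :=
  sSup {r : ℝ | ∃ α : Finset E → ℝ,
    (∀ S, 0 ≤ α S) ∧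
    (∑ S : Finset E, α S) ≤ 1 ∧
    (∀ e : E, (∑ S ∈ Finset.univ.filter (fun S : Finset E => e ∈ S), α S) ≤ y e) ∧
    r = ∑ S : Finset E, α S * f S}

/-- `x ⊕ 1_e` : the coordinatewise maximum of `x` with the indicator vector of `e`. -/
noncomputable def joinIndicator {E : Type*} [DecidableEq E]
    (x : E → ℝ) (e : E) : E → ℝ :=
  fun e' => max (x e') (if e' = e then 1 else 0)

lemma ml_le_ml {E : Type*} [Fintype E] [DecidableEq E]
    (a b : Finset E → ℝ) (hab : ∀ S, a S ≤ b S) (z : E → ℝ)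
    (hz : ∀ e, 0 ≤ z e ∧ z e ≤ 1) :
    multilinearExt a z ≤ multilinearExt b z := by
  unfold multilinearExt
  apply Finset.sum_le_sum
  intro S _
  have hp : (0:ℝ) ≤ ∏ e ∈ S, z e := Finset.prod_nonneg fun e _ => (hz e).1
  have hq : (0:ℝ) ≤ ∏ e ∈ Sᶜ, (1 - z e) :=
    Finset.prod_nonneg fun e _ => by linarith [(hz e).2]
  exact mul_le_mul_of_nonneg_right (mul_le_mul_of_nonneg_right (hab S) hp) hq

lemma ml_smul {E : Type*} [Fintype E] [DecidableEq E]
    (c : ℝ) (a : Finset E → ℝ) (z : E → ℝ) :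
    multilinearExt (fun S => c * a S) z = c * multilinearExt a z := by
  unfold multilinearExt
  rw [Finset.mul_sum]
  exact Finset.sum_congr rfl fun S _ => by ring

lemma ml_zero {E : Type*} [Fintype E] [DecidableEq E] (z : E → ℝ) :
    multilinearExt (fun _ : Finset E => (0:ℝ)) z = 0 := by
  simp [multilinearExt]

lemma concaveSet_bddAbove {E : Type*} [Fintype E] [DecidableEq E]
    (h : Finset E → ℝ) (y : E → ℝ) :
    BddAbove {r : ℝ | ∃ α : Finset E → ℝ,
      (∀ S, 0 ≤ α S) ∧
      (∑ S : Finset E, α S) ≤ 1 ∧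
      (∀ e : E, (∑ S ∈ Finset.univ.filter (fun S : Finset E => e ∈ S), α S) ≤ y e) ∧
      r = ∑ S : Finset E, α S * h S} := by
  refine ⟨∑ S : Finset E, |h S|, ?_⟩
  rintro r ⟨α, h0, h1, -, rfl⟩
  apply Finset.sum_le_sum
  intro S _
  have hαS : α S ≤ 1 :=
    le_trans (Finset.single_le_sum (fun S _ => h0 S) (Finset.mem_univ S)) h1
  calc α S * h S ≤ α S * |h S| := mul_le_mul_of_nonneg_left (le_abs_self _) (h0 S)
    _ ≤ 1 * |h S| := mul_le_mul_of_nonneg_right hαS (abs_nonneg _)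
    _ = |h S| := one_mul _

lemma le_concaveExt {E : Type*} [Fintype E] [DecidableEq E]
    (h : Finset E → ℝ) (y : E → ℝ) (α : Finset E → ℝ)
    (h0 : ∀ S, 0 ≤ α S) (h1 : (∑ S : Finset E, α S) ≤ 1)
    (h2 : ∀ e : E, (∑ S ∈ Finset.univ.filter (fun S : Finset E => e ∈ S), α S) ≤ y e) :
    (∑ S : Finset E, α S * h S) ≤ concaveExt h y :=
  le_csSup (concaveSet_bddAbove h y) ⟨α, h0, h1, h2, rfl⟩

lemma concaveExt_nonneg {E : Type*} [Fintype E] [DecidableEq E]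
    (h : Finset E → ℝ) (y : E → ℝ) (hy : ∀ e, 0 ≤ y e) :
    0 ≤ concaveExt h y := by
  have := le_concaveExt h y (fun _ => 0) (fun _ => le_refl 0) (by simp)
    (fun e => by simpa using hy e)
  simpa using this

lemma concaveExt_le {E : Type*} [Fintype E] [DecidableEq E]
    (h : Finset E → ℝ) (y : E → ℝ) (b : ℝ) (hb : 0 ≤ b)
    (H : ∀ α : Finset E → ℝ, (∀ S, 0 ≤ α S) → (∑ S : Finset E, α S) ≤ 1 →
      (∀ e : E, (∑ S ∈ Finset.univ.filter (fun S : Finset E => e ∈ S), α S) ≤ y e) →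
      (∑ S : Finset E, α S * h S) ≤ b) :
    concaveExt h y ≤ b := by
  apply Real.sSup_le _ hb
  rintro r ⟨α, h0, h1, h2, rfl⟩
  exact H α h0 h1 h2

theorem continuous_greedy_step_inequality
    {E : Type*} [Fintype E] [DecidableEq E]
    (ε : ℝ) (hε0 : 0 ≤ ε) (hε1 : ε < 1)
    (f g : Finset E → ℝ)
    (hfg : ∀ S : Finset E, (1 - ε) * g S ≤ f S ∧ f S ≤ (1 + ε) * g S)
    (yplus x : E → ℝ)
    (hy : ∀ e, 0 ≤ yplus e ∧ yplus e ≤ 1)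
    (hx : ∀ e, 0 ≤ x e ∧ x e ≤ 1)
    (hg : concaveExt g yplus ≤ multilinearExt g x +
      ∑ e : E, yplus e * (multilinearExt g (joinIndicator x e) - multilinearExt g x)) :
    ((1 - ε) / (1 + ε)) * concaveExt f yplus ≤
      multilinearExt f x +
        (∑ e : E, yplus e *
          (multilinearExt f (joinIndicator x e) - multilinearExt f x)) +
        (2 * ε / (1 + ε)) * (∑ e : E, yplus e) * multilinearExt f x := by
  have h1ε : (0:ℝ) < 1 + ε := by linarith
  rcases eq_or_lt_of_le hε0 with hε | hε
  · -- ε = 0 : f = g and the claim is exactly hg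
    subst hε
    have hfg' : f = g := funext fun S =>
      le_antisymm (by linarith [(hfg S).2]) (by linarith [(hfg S).1])
    subst hfg'
    norm_num
    linarith [hg]
  · -- ε > 0
    have hg0 : ∀ S, 0 ≤ g S := fun S => by
      have h := hfg S; nlinarith [h.1, h.2]
    -- bounds for the join points
    have hjx : ∀ e : E, ∀ e', 0 ≤ joinIndicator x e e' ∧ joinIndicator x e e' ≤ 1 := by
      intro e e'
      constructor
      · exact le_max_of_le_left (hx e').1
      · exact max_le (hx e').2 (by split <;> norm_num)
    -- pinching of multilinear extensions
    have hlow : ∀ z : E → ℝ, (∀ e, 0 ≤ z e ∧ z e ≤ 1) →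
        (1 - ε) * multilinearExt g z ≤ multilinearExt f z := by
      intro z hz
      have := ml_le_ml (fun S => (1 - ε) * g S) f (fun S => (hfg S).1) z hz
      rwa [ml_smul] at this
    have hhigh : ∀ z : E → ℝ, (∀ e, 0 ≤ z e ∧ z e ≤ 1) →
        multilinearExt f z ≤ (1 + ε) * multilinearExt g z := by
      intro z hz
      have := ml_le_ml f (fun S => (1 + ε) * g S) (fun S => (hfg S).2) z hz
      rwa [ml_smul] at this
    have hGnn : ∀ z : E → ℝ, (∀ e, 0 ≤ z e ∧ z e ≤ 1) → 0 ≤ multilinearExt g z := by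
      intro z hz
      have := ml_le_ml (fun _ => (0:ℝ)) g (fun S => hg0 S) z hz
      rwa [ml_zero] at this
    -- concave extension comparison
    have hgplus0 : 0 ≤ concaveExt g yplus :=
      concaveExt_nonneg g yplus (fun e => (hy e).1)
    have hA : concaveExt f yplus ≤ (1 + ε) * concaveExt g yplus := by
      apply concaveExt_le f yplus _ (mul_nonneg (le_of_lt h1ε) hgplus0)
      intro α h0 h1 h2
      have hle := le_concaveExt g yplus α h0 h1 h2
      have hsum : (∑ S : Finset E, α S * f S) ≤ (1 + ε) * ∑ S : Finset E, α S * g S := by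
        rw [Finset.mul_sum]
        refine Finset.sum_le_sum fun S _ => ?_
        have := mul_le_mul_of_nonneg_left (hfg S).2 (h0 S)
        linarith
      calc (∑ S : Finset E, α S * f S) ≤ (1 + ε) * ∑ S : Finset E, α S * g S := hsum
        _ ≤ (1 + ε) * concaveExt g yplus :=
          mul_le_mul_of_nonneg_left hle (le_of_lt h1ε)
    -- split the sums
    have hsplit : ∀ h : Finset E → ℝ,
        (∑ e : E, yplus e * (multilinearExt h (joinIndicator x e) - multilinearExt h x)) =
        (∑ e : E, yplus e * multilinearExt h (joinIndicator x e)) -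
          (∑ e : E, yplus e) * multilinearExt h x := by
      intro h
      rw [Finset.sum_mul, ← Finset.sum_sub_distrib]
      exact Finset.sum_congr rfl fun e _ => by ring
    rw [hsplit g] at hg
    rw [hsplit f]
    set s : ℝ := ∑ e : E, yplus e with hs
    set G : ℝ := multilinearExt g x with hG
    set F : ℝ := multilinearExt f x with hF
    have hGnn' : 0 ≤ G := hGnn x hx
    have hlowF : (1 - ε) * G ≤ F := hlow x hx
    have hhighF : F ≤ (1 + ε) * G := hhigh x hx
    -- termwise sum inequality
    have hisum : (1 - ε) * (∑ e : E, yplus e * multilinearExt g (joinIndicator x e)) ≤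
        ∑ e : E, yplus e * multilinearExt f (joinIndicator x e) := by
      rw [Finset.mul_sum]
      refine Finset.sum_le_sum fun e _ => ?_
      have hle := hlow (joinIndicator x e) (hjx e)
      calc (1 - ε) * (yplus e * multilinearExt g (joinIndicator x e))
          = yplus e * ((1 - ε) * multilinearExt g (joinIndicator x e)) := by ring
        _ ≤ yplus e * multilinearExt f (joinIndicator x e) :=
          mul_le_mul_of_nonneg_left hle (hy e).1
    -- key scalar inequality (multiplied by (1+ε))
    have hs0 : 0 ≤ s := Finset.sum_nonneg fun e _ => (hy e).1
    have hkeymul : (1 + ε) * ((1 - ε) * (1 - s) * G) ≤ (1 + ε - (1 - ε) * s) * F := by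
      rcases le_or_gt 0 (1 + ε - (1 - ε) * s) with ht | ht
      · nlinarith [mul_le_mul_of_nonneg_left hlowF ht, mul_nonneg (mul_nonneg hε0 hs0) hGnn']
      · nlinarith [mul_le_mul_of_nonpos_left hhighF (le_of_lt ht), mul_nonneg hε0 hGnn']
    set D : ℝ := 2 * ε / (1 + ε) with hD
    have hDmul : D * (1 + ε) = 2 * ε := div_mul_cancel₀ _ (ne_of_gt h1ε)
    have hkey : (1 - ε) * (1 - s) * G ≤ F - s * F + D * s * F := by
      have hprod : D * (1 + ε) * (s * F) = 2 * ε * (s * F) := by rw [hDmul]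
      have hmul : (1 + ε) * ((1 - ε) * (1 - s) * G) ≤
          (1 + ε) * (F - s * F + D * s * F) := by nlinarith [hkeymul, hprod]
      exact le_of_mul_le_mul_left hmul h1ε
    -- combine
    have hc0 : 0 ≤ (1 - ε) / (1 + ε) := div_nonneg (by linarith) (le_of_lt h1ε)
    have hchain1 : ((1 - ε) / (1 + ε)) * concaveExt f yplus ≤ (1 - ε) * concaveExt g yplus := by
      have h := mul_le_mul_of_nonneg_left hA hc0
      have heq : ((1 - ε) / (1 + ε)) * ((1 + ε) * concaveExt g yplus) =
          (1 - ε) * concaveExt g yplus := by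
        field_simp
      linarith [h, heq.le, heq.ge]
    have hchain2 : (1 - ε) * concaveExt g yplus ≤
        (1 - ε) * (G + ((∑ e : E, yplus e * multilinearExt g (joinIndicator x e)) - s * G)) :=
      mul_le_mul_of_nonneg_left hg (by linarith)
    linarith [hchain1, hchain2, hkey, hisum]
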